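/- arXiv:2305.11131 — 8 statements merged into one kernel-verified Lean document; each statement's English description precedes it below -/
import Mathlib

section
/- Consider the choice gadget on 2t+1 variables v_0, ..., v_{2t} (indices mod 2t+1) with soft equality constraints v_i = v_{i+1} for all i, soft disequality constraints v_i ≠ v_{i+t} for all i, and one crisp constraint v_0 ≠ v_t. For t ≥ 2, the minimum number of soft constraints that must be deleted so that the remaining constraints are simultaneously satisfiable by some assignment α : {v_0,...,v_{2t}} → ℕ is exactly 3. -/
lemma cast_ne_of_between {n a b : ℕ} (hab : a < b) (h2 : b < a + n) :
    (a : ZMod n) ≠ (b : ZMod n) := by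
  intro h
  rw [ZMod.natCast_eq_natCast_iff] at h
  have hd := (Nat.modEq_iff_dvd' hab.le).mp h
  have := Nat.le_of_dvd (by omega) hd
  omega

lemma chain_eq (β : ℕ → ℕ) (s : ℕ) :
    ∀ m : ℕ, (∀ k, s ≤ k → k < s + m → β k = β (k + 1)) → β s = β (s + m) := by
  intro m
  induction m with
  | zero => intro _; rfl
  | succ m ih =>
    intro h
    have h1 := ih (fun k hk hk2 => h k hk (by omega))
    rw [h1, show s + (m + 1) = (s + m) + 1 from rfl]
    exact h (s + m) (by omega) (by omega)

/-- A deletion set `X` of soft constraints of the choice gadget on `2t+1`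
variables is valid: some assignment satisfies all remaining constraints,
including the crisp constraint `v 0 ≠ v t`.  Soft constraints are indexed by
`(i, true)` for the equality `v i = v (i+1)` and `(i, false)` for the
disequality `v i ≠ v (i+t)`. -/
def GadgetValid (t : ℕ) (X : Finset (ZMod (2 * t + 1) × Bool)) : Prop :=
  ∃ α : ZMod (2 * t + 1) → ℕ,
    α 0 ≠ α (t : ZMod (2 * t + 1)) ∧
    (∀ i : ZMod (2 * t + 1), (i, true) ∉ X → α i = α (i + 1)) ∧
    (∀ i : ZMod (2 * t + 1), (i, false) ∉ X → α i ≠ α (i + (t : ZMod (2 * t + 1))))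

theorem choice_gadget_cost_three (t : ℕ) (ht : 2 ≤ t) :
    IsLeast {n : ℕ | ∃ X : Finset (ZMod (2 * t + 1) × Bool),
      X.card = n ∧ GadgetValid t X} 3 := by
  haveI : NeZero (2 * t + 1) := ⟨by omega⟩
  set n := 2 * t + 1 with hn
  constructor
  · -- membership: a valid deletion set of size 3
    refine ⟨{(((t - 1 : ℕ) : ZMod n), true), (((2 * t : ℕ) : ZMod n), true),
      (((t : ℕ) : ZMod n), false)}, ?_, ?_⟩
    · have hd1 : (((t - 1 : ℕ) : ZMod n), true) ∉
          ({(((2 * t : ℕ) : ZMod n), true), (((t : ℕ) : ZMod n), false)} :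
            Finset (ZMod n × Bool)) := by
        simp only [Finset.mem_insert, Finset.mem_singleton, Prod.mk.injEq]
        push_neg
        exact ⟨fun h => absurd h (cast_ne_of_between (by omega) (by omega)),
          fun _ => by decide⟩
      have hd2 : (((2 * t : ℕ) : ZMod n), true) ∉
          ({(((t : ℕ) : ZMod n), false)} : Finset (ZMod n × Bool)) := by
        simp only [Finset.mem_singleton, Prod.mk.injEq]
        intro h; simp at h
      rw [Finset.card_insert_of_notMem hd1, Finset.card_insert_of_notMem hd2,
        Finset.card_singleton]
    · refine ⟨fun i => if i.val < t then 0 else 1, ?_, ?_, ?_⟩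
      · have h0 : (0 : ZMod n).val = 0 := ZMod.val_zero
        have h1 : ((t : ℕ) : ZMod n).val = t := ZMod.val_cast_of_lt (by omega)
        simp only [h0, h1]
        rw [if_pos (by omega), if_neg (by omega)]
        exact Nat.zero_ne_one
      · intro i hi
        have hv : i.val < n := ZMod.val_lt i
        have hiv : ((i.val : ℕ) : ZMod n) = i := ZMod.natCast_rightInverse i
        have hne1 : i.val ≠ t - 1 := by
          intro h; apply hi; rw [← hiv, h]; simp
        have hne2 : i.val ≠ 2 * t := by
          intro h; apply hi; rw [← hiv, h]; simp
        have hadd : i + 1 = ((i.val + 1 : ℕ) : ZMod n) := by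
          rw [Nat.cast_add, Nat.cast_one, hiv]
        rw [hadd]
        have hval : ((i.val + 1 : ℕ) : ZMod n).val = i.val + 1 :=
          ZMod.val_cast_of_lt (by omega)
        simp only [hval]
        split_ifs <;> omega
      · intro i hi
        have hv : i.val < n := ZMod.val_lt i
        have hiv : ((i.val : ℕ) : ZMod n) = i := ZMod.natCast_rightInverse i
        have hne3 : i.val ≠ t := by
          intro h; apply hi; rw [← hiv, h]; simp
        have hadd : i + (t : ZMod n) = ((i.val + t : ℕ) : ZMod n) := by
          rw [Nat.cast_add, hiv]
        rw [hadd]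
        rcases lt_or_ge i.val t with hc | hc
        · have hval : ((i.val + t : ℕ) : ZMod n).val = i.val + t :=
            ZMod.val_cast_of_lt (by omega)
          simp only [hval]
          rw [if_pos hc, if_neg (by omega)]
          exact Nat.zero_ne_one
        · have hc' : t + 1 ≤ i.val := by omega
          have hval : ((i.val + t : ℕ) : ZMod n).val = i.val + t - n := by
            rw [ZMod.val_natCast]
            rw [Nat.mod_eq_sub_mod (by omega), Nat.mod_eq_of_lt (by omega)]
          simp only [hval]
          rw [if_neg (by omega), if_pos (by omega)]
          exact Nat.one_ne_zero
  · -- lower bound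
    rintro m ⟨X, hcard, α, hcrisp, heq, hne⟩
    by_contra hm
    have hm2 : X.card ≤ 2 := by omega
    set β : ℕ → ℕ := fun k => α ((k : ℕ) : ZMod n) with hβ
    have hβeq : ∀ k : ℕ, (((k : ZMod n), true) ∉ X) → β k = β (k + 1) := by
      intro k hk
      have h := heq (k : ZMod n) hk
      simpa [hβ, Nat.cast_add, Nat.cast_one] using h
    have hβne : ∀ k : ℕ, (((k : ZMod n), false) ∉ X) → β k ≠ β (k + t) := by
      intro k hk
      have h := hne (k : ZMod n) hk
      simpa [hβ, Nat.cast_add] using h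
    have hbreak : ∀ s m' : ℕ, β s ≠ β (s + m') →
        ∃ k, s ≤ k ∧ k < s + m' ∧ ((k : ZMod n), true) ∈ X := by
      intro s m' hs
      by_contra h'
      push_neg at h'
      exact hs (chain_eq β s m' (fun k hk hk2 => hβeq k (h' k hk hk2)))
    have hb0 : β 0 ≠ β t := by simpa [hβ] using hcrisp
    have hbn : β (2 * t + 1) = β 0 := by
      show α ((n : ℕ) : ZMod n) = α ((0 : ℕ) : ZMod n)
      rw [ZMod.natCast_self, Nat.cast_zero]
    have hbt : β t ≠ β (t + (t + 1)) := by
      rw [show t + (t + 1) = 2 * t + 1 by omega, hbn]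
      exact fun h => hb0 h.symm
    obtain ⟨j1, hj1l, hj1u, hj1X⟩ := hbreak 0 t (by rw [Nat.zero_add]; exact hb0)
    obtain ⟨j2, hj2l, hj2u, hj2X⟩ := hbreak t (t + 1) hbt
    simp only [Nat.zero_add] at hj1u
    have hj12 : ((j1 : ZMod n), true) ≠ ((j2 : ZMod n), true) := by
      intro h
      exact cast_ne_of_between (show j1 < j2 by omega) (by omega)
        (congrArg Prod.fst h)
    have hPsub : ({((j1 : ZMod n), true), ((j2 : ZMod n), true)} :
        Finset (ZMod n × Bool)) ⊆ X := by
      intro z hz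
      simp only [Finset.mem_insert, Finset.mem_singleton] at hz
      rcases hz with h | h <;> subst h <;> assumption
    have hPcard : ({((j1 : ZMod n), true), ((j2 : ZMod n), true)} :
        Finset (ZMod n × Bool)).card = 2 := by
      rw [Finset.card_insert_of_notMem (by simpa using hj12),
        Finset.card_singleton]
    have hX : X = ({((j1 : ZMod n), true), ((j2 : ZMod n), true)} :
        Finset (ZMod n × Bool)) :=
      (Finset.eq_of_subset_of_card_le hPsub (by omega)).symm
    have notin_false : ∀ z : ZMod n, (z, false) ∉ X := by
      intro z hz
      rw [hX] at hz
      simp at hz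
    have notin_true : ∀ k : ℕ, (k : ZMod n) ≠ (j1 : ZMod n) →
        (k : ZMod n) ≠ (j2 : ZMod n) → ((k : ZMod n), true) ∉ X := by
      intro k h1 h2 hk
      rw [hX] at hk
      simp only [Finset.mem_insert, Finset.mem_singleton, Prod.mk.injEq] at hk
      rcases hk with ⟨h, -⟩ | ⟨h, -⟩
      · exact h1 h
      · exact h2 h
    rcases le_or_gt j2 (j1 + t) with hcase | hcase
    · have hchain : β (j2 + 1) = β (j2 + 1 + t) := by
        refine chain_eq β (j2 + 1) t (fun k hk hk2 => hβeq k ?_)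
        refine notin_true k ?_ ?_
        · exact (cast_ne_of_between (show j1 < k by omega) (by omega)).symm
        · exact (cast_ne_of_between (show j2 < k by omega) (by omega)).symm
      exact hβne (j2 + 1) (notin_false _) hchain
    · have hchain : β (j1 + 1) = β (j1 + 1 + t) := by
        refine chain_eq β (j1 + 1) t (fun k hk hk2 => hβeq k ?_)
        refine notin_true k ?_ ?_
        · exact (cast_ne_of_between (show j1 < k by omega) (by omega)).symm
        · exact cast_ne_of_between (show k < j2 by omega) (by omega)
      exact hβne (j1 + 1) (notin_false _) hchain
end

section
/- In the choice gadget on 2t+1 variables (t ≥ 2) with soft constraints v_i = v_{i+1} and v_i ≠ v_{i+t} for all i mod 2t+1 and crisp constraint v_0 ≠ v_t: if X is a valid deletion set of size 3 containing a disequality constraint v_i ≠ v_{i+t}, then X = { v_{i-1} = v_i, v_i ≠ v_{i+t}, v_{i+t} = v_{i+t+1} }. -/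
theorem choice_gadget_solution_structure (t : ℕ) (ht : 2 ≤ t)
    (X : Finset (ZMod (2 * t + 1) × Bool)) (hcard : X.card = 3)
    (hvalid : GadgetValid t X)
    (i : ZMod (2 * t + 1)) (hi : (i, false) ∈ X) :
    X = {(i - 1, true), (i, false), (i + (t : ZMod (2 * t + 1)), true)} := by
  classical
  haveI : NeZero (2 * t + 1) := ⟨by omega⟩
  obtain ⟨α, hcrisp, heq, hne⟩ := hvalid
  -- cast injectivity
  have castinj : ∀ u v : ℕ, u < 2*t+1 → v < 2*t+1 → ((u : ZMod (2*t+1)) = (v : ZMod (2*t+1))) → u = v := by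
    intro u v hu hv h
    have := congrArg ZMod.val h
    rwa [ZMod.val_cast_of_lt hu, ZMod.val_cast_of_lt hv] at this
  -- chain lemma
  have chain : ∀ (j : ZMod (2*t+1)) (k : ℕ),
      (∀ m < k, (j + (m : ZMod (2*t+1)), true) ∉ X) → α j = α (j + (k : ZMod (2*t+1))) := by
    intro j k
    induction k with
    | zero => intro _; simp
    | succ k ih =>
      intro h
      have h1 : α j = α (j + (k : ZMod (2*t+1))) := ih (fun m hm => h m (by omega))
      have h2 : (j + (k : ZMod (2*t+1)), true) ∉ X := h k (by omega)
      rw [h1, heq _ h2]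
      congr 1
      push_cast
      ring
  -- two distinct true elements
  have hex1 : ∃ m < t, ((m : ZMod (2*t+1)), true) ∈ X := by
    by_contra h
    push_neg at h
    apply hcrisp
    have hc := chain 0 t (fun m hm => by simpa using h m hm)
    simpa using hc
  have hex2 : ∃ m < t + 1, ((t : ZMod (2*t+1)) + (m : ZMod (2*t+1)), true) ∈ X := by
    by_contra h
    push_neg at h
    apply hcrisp
    have hc := chain (t : ZMod (2*t+1)) (t + 1) (fun m hm => h m hm)
    have hz : ((t : ZMod (2*t+1)) + ((t + 1 : ℕ) : ZMod (2*t+1))) = 0 := by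
      have h0 : (((2 * t + 1 : ℕ)) : ZMod (2*t+1)) = 0 := ZMod.natCast_self _
      push_cast at h0 ⊢
      linear_combination h0
    rw [hz] at hc
    exact hc.symm
  obtain ⟨m₁, hm₁, hx1⟩ := hex1
  obtain ⟨m₂, hm₂, hx2⟩ := hex2
  set T : Finset (ZMod (2*t+1) × Bool) := X.filter (fun p => p.2 = true) with hT
  have hx1T : ((m₁ : ZMod (2*t+1)), true) ∈ T := Finset.mem_filter.mpr ⟨hx1, rfl⟩
  have hx2T : ((t : ZMod (2*t+1)) + (m₂ : ZMod (2*t+1)), true) ∈ T := Finset.mem_filter.mpr ⟨hx2, rfl⟩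
  have hne12 : ((m₁ : ZMod (2*t+1)), true) ≠ ((t : ZMod (2*t+1)) + (m₂ : ZMod (2*t+1)), true) := by
    intro h
    have h1 : (m₁ : ZMod (2*t+1)) = ((t + m₂ : ℕ) : ZMod (2*t+1)) := by
      have := congrArg Prod.fst h
      push_cast
      simpa using this
    have := castinj m₁ (t + m₂) (by omega) (by omega) h1
    omega
  have hTcard2 : 2 ≤ T.card := by
    have hsub : ({((m₁ : ZMod (2*t+1)), true), ((t : ZMod (2*t+1)) + (m₂ : ZMod (2*t+1)), true)} : Finset _) ⊆ T := by
      intro p hp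
      simp only [Finset.mem_insert, Finset.mem_singleton] at hp
      rcases hp with h | h <;> subst h <;> assumption
    have := Finset.card_le_card hsub
    rwa [Finset.card_insert_of_notMem (by simpa using hne12), Finset.card_singleton] at this
  set F : Finset (ZMod (2*t+1) × Bool) := X.filter (fun p => ¬ p.2 = true) with hF
  have hcards : T.card + F.card = 3 := by
    rw [hT, hF, Finset.card_filter_add_card_filter_not, hcard]
  have hiF : (i, false) ∈ F := Finset.mem_filter.mpr ⟨hi, by simp⟩
  have hFcard : F.card = 1 := by
    have h1 : 1 ≤ F.card := Finset.card_pos.mpr ⟨_, hiF⟩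
    omega
  have hFsingle : F = {(i, false)} := by
    obtain ⟨a, ha⟩ := Finset.card_eq_one.mp hFcard
    rw [ha] at hiF ⊢
    simp only [Finset.mem_singleton] at hiF
    rw [hiF]
  have hfalse : ∀ j : ZMod (2*t+1), (j, false) ∈ X → j = i := by
    intro j hj
    have : (j, false) ∈ F := Finset.mem_filter.mpr ⟨hj, by simp⟩
    rw [hFsingle] at this
    simpa using this
  have hTcard : T.card = 2 := by omega
  -- the covered set S
  set S : Finset (ZMod (2*t+1)) :=
    Finset.univ.filter (fun j => ∃ m < t, (j + (m : ZMod (2*t+1)), true) ∈ X) with hS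
  have hSsub : S ⊆ T.biUnion (fun p => (Finset.range t).image (fun m : ℕ => p.1 - (m : ZMod (2*t+1)))) := by
    intro j hj
    rw [hS, Finset.mem_filter] at hj
    obtain ⟨-, m, hm, hmem⟩ := hj
    refine Finset.mem_biUnion.mpr ⟨(j + (m : ZMod (2*t+1)), true), Finset.mem_filter.mpr ⟨hmem, rfl⟩, ?_⟩
    refine Finset.mem_image.mpr ⟨m, Finset.mem_range.mpr hm, ?_⟩
    simp
  have hScard : S.card ≤ 2 * t := by
    calc S.card ≤ (T.biUnion (fun p => (Finset.range t).image (fun m : ℕ => p.1 - (m : ZMod (2*t+1))))).card :=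
          Finset.card_le_card hSsub
      _ ≤ ∑ p ∈ T, ((Finset.range t).image (fun m : ℕ => p.1 - (m : ZMod (2*t+1)))).card :=
          Finset.card_biUnion_le
      _ ≤ ∑ _p ∈ T, t := Finset.sum_le_sum (fun p _ =>
          le_trans Finset.card_image_le (le_of_eq (Finset.card_range t)))
      _ = 2 * t := by rw [Finset.sum_const, hTcard, smul_eq_mul]
  have hSC : ∀ j : ZMod (2*t+1), j ∉ S → j = i := by
    intro j hj
    by_contra hji
    have hjf : (j, false) ∉ X := fun h => hji (hfalse j h)
    apply hne j hjf
    apply chain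
    intro m hm hmem
    exact hj (Finset.mem_filter.mpr ⟨Finset.mem_univ _, m, hm, hmem⟩)
  have hiS : i ∉ S := by
    have hexj : ∃ j : ZMod (2*t+1), j ∉ S := by
      by_contra h
      push_neg at h
      have hu : (Finset.univ : Finset (ZMod (2*t+1))) ⊆ S := fun j _ => h j
      have := Finset.card_le_card hu
      rw [Finset.card_univ, ZMod.card] at this
      omega
    obtain ⟨j, hj⟩ := hexj
    rwa [hSC j hj] at hj
  have hiS' : ∀ m < t, (i + (m : ZMod (2*t+1)), true) ∉ X := by
    intro m hm hmem
    exact hiS (Finset.mem_filter.mpr ⟨Finset.mem_univ _, m, hm, hmem⟩)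
  have hone : (1 : ZMod (2*t+1)) ≠ 0 := by
    intro h
    have h1 : ((1 : ℕ) : ZMod (2*t+1)) = ((0 : ℕ) : ZMod (2*t+1)) := by push_cast; exact h
    have := castinj 1 0 (by omega) (by omega) h1
    omega
  -- membership 1 : (i + t, true) ∈ X
  have hmem1 : ((i + (t : ZMod (2*t+1))), true) ∈ X := by
    have h1 : i + 1 ∈ S := by
      by_contra h
      have := hSC _ h
      have : (1 : ZMod (2*t+1)) = 0 := by linear_combination this
      exact hone this
    rw [hS, Finset.mem_filter] at h1
    obtain ⟨-, m, hm, hx⟩ := h1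
    have hmt : m = t - 1 := by
      by_contra h'
      apply hiS' (m + 1) (by omega)
      have : i + ((m + 1 : ℕ) : ZMod (2*t+1)) = i + 1 + (m : ZMod (2*t+1)) := by push_cast; ring
      rwa [this]
    subst hmt
    have harith : i + 1 + ((t - 1 : ℕ) : ZMod (2*t+1)) = i + (t : ZMod (2*t+1)) := by
      have : (1 : ZMod (2*t+1)) + ((t - 1 : ℕ) : ZMod (2*t+1)) = ((t : ℕ) : ZMod (2*t+1)) := by
        rw [Nat.cast_sub (show 1 ≤ t by omega)]
        push_cast
        ring
      linear_combination this
    rwa [harith] at hx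
  -- membership 2 : (i - 1, true) ∈ X
  have hmem2 : ((i - 1), true) ∈ X := by
    have h1 : i - 1 ∈ S := by
      by_contra h
      have := hSC _ h
      have : (1 : ZMod (2*t+1)) = 0 := by linear_combination -this
      exact hone this
    rw [hS, Finset.mem_filter] at h1
    obtain ⟨-, m, hm, hx⟩ := h1
    have hm0 : m = 0 := by
      by_contra h'
      apply hiS' (m - 1) (by omega)
      have : i + ((m - 1 : ℕ) : ZMod (2*t+1)) = i - 1 + (m : ZMod (2*t+1)) := by
        have h2 : ((m - 1 : ℕ) : ZMod (2*t+1)) + 1 = ((m : ℕ) : ZMod (2*t+1)) := by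
          rw [Nat.cast_sub (show 1 ≤ m by omega)]
          push_cast
          ring
        linear_combination h2
      rwa [this]
    subst hm0
    simpa using hx
  -- finish
  have hne13 : (i - 1, true) ≠ ((i + (t : ZMod (2*t+1))), true) := by
    intro h
    have h1 : ((t + 1 : ℕ) : ZMod (2*t+1)) = ((0 : ℕ) : ZMod (2*t+1)) := by
      have := congrArg Prod.fst h
      push_cast
      linear_combination -this
    have := castinj (t + 1) 0 (by omega) (by omega) h1
    omega
  have hsub : ({(i - 1, true), (i, false), (i + (t : ZMod (2*t+1)), true)} : Finset (ZMod (2*t+1) × Bool)) ⊆ X := by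
    intro p hp
    simp only [Finset.mem_insert, Finset.mem_singleton] at hp
    rcases hp with h | h | h <;> subst h <;> assumption
  have hc3 : ({(i - 1, true), (i, false), (i + (t : ZMod (2*t+1)), true)} : Finset (ZMod (2*t+1) × Bool)).card = 3 := by
    rw [Finset.card_insert_of_notMem (by simp [hne13]), Finset.card_insert_of_notMem (by simp),
      Finset.card_singleton]
  exact (Finset.eq_of_subset_of_card_le hsub (by omega)).symm
end

section
/- Let G be a graph, x a vertex, and W a set of vertices with x ∉ W. Among all minimum-size xW-separators (vertex sets S disjoint from {x} whose removal disconnects x from all of W), there is a unique one minimizing the set of vertices reachable from x after its removal; equivalently, if S₁ and S₂ are both minimum xW-separators, then the set of vertices reachable from x in G − S₁ intersected with those reachable in G − S₂ gives rise, via its neighborhood, to an xW-separator of size at most |S₁|, and the closest minimum xW-separator is unique. -/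
/-- The set of vertices reachable from `x` by a walk avoiding `S`. -/
def reachSet {V : Type*} (G : SimpleGraph V) (x : V) (S : Finset V) : Set V :=
  {v | ∃ p : G.Walk x v, ∀ u ∈ p.support, u ∉ S}

/-- `S` is an `xW`-separator: `x ∉ S` and no vertex of `W` is reachable from
`x` by a walk avoiding `S`. -/
def IsSep {V : Type*} (G : SimpleGraph V) (x : V) (W : Set V) (S : Finset V) : Prop :=
  x ∉ S ∧ ∀ w ∈ W, w ∉ reachSet G x S

/-- `S` is a minimum-size `xW`-separator. -/
def IsMinSep {V : Type*} (G : SimpleGraph V) (x : V) (W : Set V) (S : Finset V) : Prop :=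
  IsSep G x W S ∧ ∀ S' : Finset V, IsSep G x W S' → S.card ≤ S'.card

/-!
Write `R(S)` for the vertices reachable from `x` in `G - S` and `∂A` for the vertices outside
`A` with a neighbour in `A`. A minimum separator `S` satisfies `S = ∂R(S)`, since
`∂R(S) ⊆ S` is itself a separator. The map `A ↦ |∂A|` is submodular, so for minimum
separators `S₁, S₂` the separators `∂(R(S₁) ∩ R(S₂))` and `∂(R(S₁) ∪ R(S₂))` have total size
at most `|S₁| + |S₂|`; as each has size at least `|S₁| = |S₂|`, the first one is again minimum.
Taking `S₁` with `|R(S₁)|` least, `R(∂(R(S₁) ∩ R(S₂))) ⊆ R(S₁) ∩ R(S₂)` forces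
`R(S₁) ⊆ R(S₂)`. Uniqueness follows from `S = ∂R(S)`.
-/

open Finset

namespace SimpleGraph

variable {V : Type*} [Fintype V] [DecidableEq V] (G : SimpleGraph V)

open Classical in
noncomputable def outerBoundary (A : Finset V) : Finset V :=
  {v | v ∉ A ∧ ∃ u ∈ A, G.Adj u v}

variable {G}

@[simp]
lemma mem_outerBoundary {A : Finset V} {v : V} :
    v ∈ G.outerBoundary A ↔ v ∉ A ∧ ∃ u ∈ A, G.Adj u v := by
  simp [outerBoundary]

lemma outerBoundary_inter_union_subset (A B : Finset V) :
    G.outerBoundary (A ∩ B) ∪ G.outerBoundary (A ∪ B) ⊆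
      G.outerBoundary A ∪ G.outerBoundary B := by
  intro v
  simp only [mem_union, mem_outerBoundary, mem_inter]
  grind

lemma outerBoundary_inter_inter_union_subset (A B : Finset V) :
    G.outerBoundary (A ∩ B) ∩ G.outerBoundary (A ∪ B) ⊆
      G.outerBoundary A ∩ G.outerBoundary B := by
  intro v
  simp only [mem_inter, mem_union, mem_outerBoundary]
  grind

lemma card_outerBoundary_inter_add_card_outerBoundary_union_le (A B : Finset V) :
    #(G.outerBoundary (A ∩ B)) + #(G.outerBoundary (A ∪ B)) ≤
      #(G.outerBoundary A) + #(G.outerBoundary B) := by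
  rw [← card_union_add_card_inter, ← card_union_add_card_inter (G.outerBoundary A)]
  exact add_le_add (card_le_card (outerBoundary_inter_union_subset A B))
    (card_le_card (outerBoundary_inter_inter_union_subset A B))

end SimpleGraph

open SimpleGraph

section

variable {V : Type*} {G : SimpleGraph V} {x : V} {W : Set V} {S : Finset V}

lemma mem_reachSet_self (hx : x ∉ S) : x ∈ reachSet G x S :=
  ⟨.nil, by simpa using hx⟩

lemma notMem_of_mem_reachSet {v : V} (hv : v ∈ reachSet G x S) : v ∉ S := by
  obtain ⟨p, hp⟩ := hv
  exact hp v p.end_mem_support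

lemma mem_reachSet_of_adj {u v : V} (hu : u ∈ reachSet G x S) (huv : G.Adj u v) (hv : v ∉ S) :
    v ∈ reachSet G x S := by
  obtain ⟨p, hp⟩ := hu
  refine ⟨p.concat huv, fun w hw => ?_⟩
  rw [Walk.support_concat, List.mem_append, List.mem_singleton] at hw
  rcases hw with hw | rfl
  exacts [hp w hw, hv]

lemma IsMinSep.of_card_le {T : Finset V} (hS : IsMinSep G x W S) (hT : IsSep G x W T)
    (hTS : #T ≤ #S) : IsMinSep G x W T :=
  ⟨hT, fun _ hS' => hTS.trans (hS.2 _ hS')⟩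

variable [Fintype V]

open Classical in
noncomputable def reachFinset (G : SimpleGraph V) (x : V) (S : Finset V) : Finset V :=
  (reachSet G x S).toFinset

@[simp]
lemma coe_reachFinset : (reachFinset G x S : Set V) = reachSet G x S := by
  simp [reachFinset]

@[simp]
lemma mem_reachFinset {v : V} : v ∈ reachFinset G x S ↔ v ∈ reachSet G x S := by
  simp [reachFinset]

lemma IsSep.self_mem_reachFinset (hS : IsSep G x W S) : x ∈ reachFinset G x S :=
  mem_reachFinset.mpr (mem_reachSet_self hS.1)

lemma IsSep.notMem_reachFinset (hS : IsSep G x W S) {w : V} (hw : w ∈ W) :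
    w ∉ reachFinset G x S :=
  fun hwR => hS.2 w hw (mem_reachFinset.mp hwR)

lemma exists_isSep (hxW : x ∉ W) : ∃ S, IsSep G x W S := by
  classical
  refine ⟨W.toFinset, by simpa using hxW, fun w hw hwR => ?_⟩
  exact notMem_of_mem_reachSet hwR (by simpa using hw)

lemma exists_isMinSep (hxW : x ∉ W) : ∃ S, IsMinSep G x W S := by
  obtain ⟨S, hS, hmin⟩ := Set.exists_min_image {S | IsSep G x W S} card
    (Set.toFinite _) (exists_isSep hxW)
  exact ⟨S, hS, hmin⟩

variable [DecidableEq V]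

lemma reachSet_outerBoundary_subset {A : Finset V} (hx : x ∈ A) :
    reachSet G x (G.outerBoundary A) ⊆ A := by
  rintro v ⟨p, hp⟩
  by_contra hv
  obtain ⟨d, hd, hfst, hsnd⟩ := p.exists_boundary_dart _ hx hv
  exact hp d.snd (p.dart_snd_mem_support_of_mem_darts hd)
    (mem_outerBoundary.mpr ⟨hsnd, d.fst, hfst, d.adj⟩)

lemma reachFinset_outerBoundary_subset {A : Finset V} (hx : x ∈ A) :
    reachFinset G x (G.outerBoundary A) ⊆ A := by
  rw [← coe_subset, coe_reachFinset]
  exact reachSet_outerBoundary_subset hx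

lemma outerBoundary_reachFinset_subset : G.outerBoundary (reachFinset G x S) ⊆ S := by
  intro v hv
  obtain ⟨hvR, u, huR, huv⟩ := mem_outerBoundary.mp hv
  by_contra hvS
  exact hvR (mem_reachFinset.mpr (mem_reachSet_of_adj (mem_reachFinset.mp huR) huv hvS))

lemma isSep_outerBoundary {A : Finset V} (hx : x ∈ A) (hW : ∀ w ∈ W, w ∉ A) :
    IsSep G x W (G.outerBoundary A) :=
  ⟨fun hxA => (mem_outerBoundary.mp hxA).1 hx,
    fun w hw hwR => hW w hw (reachSet_outerBoundary_subset hx hwR)⟩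

namespace IsSep

variable {T : Finset V}

lemma isSep_outerBoundary_reachFinset (hS : IsSep G x W S) :
    IsSep G x W (G.outerBoundary (reachFinset G x S)) :=
  isSep_outerBoundary hS.self_mem_reachFinset fun _ => hS.notMem_reachFinset

lemma isSep_outerBoundary_inter (hS : IsSep G x W S) (hT : IsSep G x W T) :
    IsSep G x W (G.outerBoundary (reachFinset G x S ∩ reachFinset G x T)) :=
  isSep_outerBoundary (mem_inter.mpr ⟨hS.self_mem_reachFinset, hT.self_mem_reachFinset⟩)
    fun _ hw hwST => hS.notMem_reachFinset hw (mem_inter.mp hwST).1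

lemma isSep_outerBoundary_union (hS : IsSep G x W S) (hT : IsSep G x W T) :
    IsSep G x W (G.outerBoundary (reachFinset G x S ∪ reachFinset G x T)) :=
  isSep_outerBoundary (mem_union_left _ hS.self_mem_reachFinset)
    fun _ hw hwST =>
      (mem_union.mp hwST).elim (hS.notMem_reachFinset hw) (hT.notMem_reachFinset hw)

end IsSep

namespace IsMinSep

variable {T : Finset V}

lemma eq_outerBoundary_reachFinset (hS : IsMinSep G x W S) :
    S = G.outerBoundary (reachFinset G x S) :=
  (eq_of_subset_of_card_le outerBoundary_reachFinset_subset
    (hS.2 _ hS.1.isSep_outerBoundary_reachFinset)).symm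

lemma outerBoundary_inter (hS : IsMinSep G x W S) (hT : IsMinSep G x W T) :
    IsMinSep G x W (G.outerBoundary (reachFinset G x S ∩ reachFinset G x T)) := by
  refine hS.of_card_le (hS.1.isSep_outerBoundary_inter hT.1) ?_
  have hsubmod := card_outerBoundary_inter_add_card_outerBoundary_union_le (G := G)
    (reachFinset G x S) (reachFinset G x T)
  rw [← hS.eq_outerBoundary_reachFinset, ← hT.eq_outerBoundary_reachFinset] at hsubmod
  have hunion := hT.2 _ (hS.1.isSep_outerBoundary_union hT.1)
  omega

lemma reachSet_subset_of_forall_card_le (hS : IsMinSep G x W S) (hT : IsMinSep G x W T)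
    (hleast : ∀ S', IsMinSep G x W S' → #(reachFinset G x S) ≤ #(reachFinset G x S')) :
    reachSet G x S ⊆ reachSet G x T := by
  set A := reachFinset G x S ∩ reachFinset G x T
  have hxA : x ∈ A := mem_inter.mpr ⟨hS.1.self_mem_reachFinset, hT.1.self_mem_reachFinset⟩
  have hcard : #(reachFinset G x S) ≤ #A :=
    (hleast _ (hS.outerBoundary_inter hT)).trans
      (card_le_card (reachFinset_outerBoundary_subset hxA))
  rw [← coe_reachFinset, ← coe_reachFinset, coe_subset, ← inter_eq_left]
  exact eq_of_subset_of_card_le inter_subset_left hcard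

end IsMinSep

end

theorem closest_min_separator_unique_general {V : Type*} [Fintype V]
    (G : SimpleGraph V) (x : V) (W : Set V) (hxW : x ∉ W) :
    ∃! S : Finset V, IsMinSep G x W S ∧
      ∀ S' : Finset V, IsMinSep G x W S' → reachSet G x S ⊆ reachSet G x S' := by
  classical
  obtain ⟨S, hS, hleast⟩ := Set.exists_min_image {S | IsMinSep G x W S}
    (fun S => #(reachFinset G x S)) (Set.toFinite _) (exists_isMinSep hxW)
  have hclosest : ∀ T, IsMinSep G x W T → reachSet G x S ⊆ reachSet G x T :=
    fun T hT => hS.reachSet_subset_of_forall_card_le hT hleast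
  refine ⟨S, ⟨hS, hclosest⟩, fun T ⟨hT, hTclosest⟩ => ?_⟩
  have hreach : reachFinset G x T = reachFinset G x S := by
    rw [← coe_inj, coe_reachFinset, coe_reachFinset]
    exact (hTclosest S hS).antisymm (hclosest T hT)
  rw [hT.eq_outerBoundary_reachFinset, hS.eq_outerBoundary_reachFinset, hreach]

theorem closest_min_separator_unique {V : Type*} [Fintype V] [DecidableEq V]
    (G : SimpleGraph V) (x : V) (W : Set V) (hxW : x ∉ W) :
    ∃! S : Finset V, IsMinSep G x W S ∧
      ∀ S' : Finset V, IsMinSep G x W S' → reachSet G x S ⊆ reachSet G x S' :=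
  closest_min_separator_unique_general G x W hxW
end

section
/- Let G be a graph, X, Y disjoint vertex subsets such that X intersects every connected component of G in at most one vertex, and R ⊆ V(G) such that Y ⊆ R and every vertex of R \ Y is connected to X in G − Y. For a vertex s connected to some x ∈ X in G with s ∉ N(x) ∪ R, define R_s = R ∩ N(H) where H is the connected component of s in G − R. If s is disconnected from X in G − Y, then R_s ⊆ Y. -/
theorem decided_separators {V : Type*} (G : SimpleGraph V) (X Y : Set V)
    (hdisj : Disjoint X Y)
    (hXcomp : ∀ x₁ ∈ X, ∀ x₂ ∈ X, G.Reachable x₁ x₂ → x₁ = x₂)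
    (R : Set V) (hYR : Y ⊆ R)
    (hRconn : ∀ v ∈ R \ Y, ∃ x ∈ X, ∃ p : G.Walk v x, ∀ u ∈ p.support, u ∉ Y)
    (s x : V) (hx : x ∈ X) (hreach : G.Reachable s x)
    (hsNx : ¬ G.Adj x s) (hsR : s ∉ R)
    (hsep : ∀ x' ∈ X, ¬ ∃ p : G.Walk s x', ∀ u ∈ p.support, u ∉ Y) :
    {v | v ∈ R ∧ ∃ u : V, (∃ p : G.Walk s u, ∀ w ∈ p.support, w ∉ R) ∧ G.Adj u v} ⊆ Y := by
  rintro v ⟨hvR, u, ⟨q, hq⟩, huv⟩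
  by_contra hvY
  obtain ⟨x', hx', p, hp⟩ := hRconn v ⟨hvR, hvY⟩
  refine hsep x' hx' ⟨q.append (SimpleGraph.Walk.cons huv p), ?_⟩
  intro w hw
  rw [SimpleGraph.Walk.mem_support_append_iff] at hw
  rcases hw with hw | hw
  · exact fun hwY => hq w hw (hYR hwY)
  · rw [SimpleGraph.Walk.support_cons, List.mem_cons] at hw
    rcases hw with rfl | hw
    · exact fun hwY => hq w q.end_mem_support (hYR hwY)
    · exact hp w hw
end

section
/- Let G be a graph, X ⊆ V(G), and let T ⊆ V(G) be a set of terminals. Let x be a vertex such that {x} satisfies T (i.e., {x} separates some pair of vertices of T), and let W ⊆ V(G) \ {x} be an xt-separator for some t ∈ T. Then W satisfies T, that is, there exist s, t ∈ T such that W is an st-separator. -/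
/-- `W` satisfies terminal set `T`: some pair of distinct terminals is
separated by `W` (no walk between them avoiding `W`; this covers the case
where one of them lies in `W`). -/
def SatisfiesT {V : Type*} (G : SimpleGraph V) (T : Set V) (W : Set V) : Prop :=
  ∃ s ∈ T, ∃ t ∈ T, s ≠ t ∧ ¬ ∃ p : G.Walk s t, ∀ u ∈ p.support, u ∉ W

theorem separate_one_terminal_suffices {V : Type*} (G : SimpleGraph V)
    (T : Set V) (x : V) (W : Set V)
    (hxT : SatisfiesT G T {x}) (hxW : x ∉ W)
    (hsep : ∃ t ∈ T, ¬ ∃ p : G.Walk x t, ∀ u ∈ p.support, u ∉ W) :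
    SatisfiesT G T W := by
  classical
  obtain ⟨s, hs, t, ht, hst, hno⟩ := hxT
  obtain ⟨t0, ht0, hxt0⟩ := hsep
  by_cases h : ∃ p : G.Walk s t, ∀ u ∈ p.support, u ∉ W
  · obtain ⟨p, hp⟩ := h
    have hx : x ∈ p.support := by
      by_contra hx
      exact hno ⟨p, fun u hu hmem => hx ((Set.eq_of_mem_singleton hmem) ▸ hu)⟩
    set q := p.dropUntil x hx with hqdef
    have hq : ∀ u ∈ q.support, u ∉ W := fun u hu =>
      hp u (p.support_dropUntil_subset hx hu)
    by_cases ht' : t0 = t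
    · subst ht'
      exact absurd ⟨q, hq⟩ hxt0
    · refine ⟨t, ht, t0, ht0, Ne.symm ht', ?_⟩
      rintro ⟨r, hr⟩
      refine hxt0 ⟨q.append r, fun u hu => ?_⟩
      rcases (SimpleGraph.Walk.mem_support_append_iff _ _).1 hu with h' | h'
      · exact hq u h'
      · exact hr u h'
  · exact ⟨s, hs, t, ht, hst, h⟩
end

section
/- Correctness of the Steiner Multicut-to-MinCSP reduction: let G be a graph and 𝒯 = {T_1, ..., T_k} a family of 3-element vertex subsets. Build a CSP instance with a soft constraint u = v for each edge uv ∈ E(G) and crisp constraint NAE₃(x,y,z) for each T_i = {x,y,z}, where NAE₃ holds of (a,b,c) iff not (a = b = c). Then there is an edge set S ⊆ E(G) of size at most k such that every T_i is separated (not all three vertices in one component of G − S) if and only if there is a set Z of at most k soft constraints and an assignment satisfying all constraints outside Z. -/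
lemma reachable_const {V : Type*} (G : SimpleGraph V) (Z : Set (Sym2 V)) (α : V → ℕ)
    (h : ∀ u v, G.Adj u v → s(u, v) ∉ Z → α u = α v) :
    ∀ {u v : V}, (G.deleteEdges Z).Reachable u v → α u = α v := by
  intro u v ⟨w⟩
  induction w with
  | nil => rfl
  | cons ha _ ih =>
    rw [SimpleGraph.deleteEdges_adj] at ha
    exact (h _ _ ha.1 ha.2).trans ih

theorem steiner_multicut_to_mincsp {V : Type*} [Fintype V] [DecidableEq V]
    (G : SimpleGraph V) (𝒯 : Set (Finset V)) (h𝒯 : ∀ T ∈ 𝒯, T.card = 3) (k : ℕ) :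
    (∃ S : Finset (Sym2 V), ↑S ⊆ G.edgeSet ∧ S.card ≤ k ∧
      ∀ T ∈ 𝒯, ∃ u ∈ T, ∃ v ∈ T, ¬ (G.deleteEdges ↑S).Reachable u v) ↔
    (∃ Z : Finset (Sym2 V), ↑Z ⊆ G.edgeSet ∧ Z.card ≤ k ∧
      ∃ α : V → ℕ,
        (∀ u v : V, G.Adj u v → s(u, v) ∉ Z → α u = α v) ∧
        ∀ T ∈ 𝒯, ∃ u ∈ T, ∃ v ∈ T, α u ≠ α v) := by
  constructor
  · rintro ⟨S, hS, hk, hsep⟩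
    refine ⟨S, hS, hk, ?_⟩
    obtain ⟨n, ⟨e⟩⟩ := Finite.exists_equiv_fin ((G.deleteEdges ↑S).ConnectedComponent)
    refine ⟨fun v => (e ((G.deleteEdges ↑S).connectedComponentMk v) : ℕ), ?_, ?_⟩
    · intro u v hadj hnot
      have : (G.deleteEdges ↑S).Adj u v := by
        rw [SimpleGraph.deleteEdges_adj]; exact ⟨hadj, hnot⟩
      simp [SimpleGraph.ConnectedComponent.eq.mpr this.reachable]
    · intro T hT
      obtain ⟨u, hu, v, hv, hnr⟩ := hsep T hT
      refine ⟨u, hu, v, hv, ?_⟩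
      intro hEq
      apply hnr
      exact SimpleGraph.ConnectedComponent.eq.mp
        (e.injective (Fin.val_injective hEq))
  · rintro ⟨Z, hZ, hk, α, hsoft, hnae⟩
    refine ⟨Z, hZ, hk, fun T hT => ?_⟩
    obtain ⟨u, hu, v, hv, hne⟩ := hnae T hT
    exact ⟨u, hu, v, hv, fun hr => hne (reachable_const G ↑Z α hsoft hr)⟩
end

section
/- Correctness of the Hitting Set to ODD₃-MinCSP gadget: let e = {a_1, ..., a_ℓ} and consider variables x_{a_1}, ..., x_{a_ℓ}, y_2, ..., y_ℓ with constraints ODD₃(x_{a_1}, x_{a_2}, y_2), ODD₃(y_{i−1}, x_{a_i}, y_i) for 3 ≤ i ≤ ℓ, and x_{a_1} ≠ y_ℓ, where ODD₃ ⊆ ℕ³ contains exactly the triples with either all entries equal or all entries pairwise distinct. Then an assignment to x_{a_1}, ..., x_{a_ℓ} extends to y_2, ..., y_ℓ satisfying all these constraints if and only if not all of x_{a_1}, ..., x_{a_ℓ} receive the same value. -/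
/-- `ODD₃`: all three values equal, or all three pairwise distinct. -/
def ODD3 (a b c : ℕ) : Prop :=
  (a = b ∧ b = c) ∨ (a ≠ b ∧ a ≠ c ∧ b ≠ c)

/-- Auxiliary chain: stays at `a 0` while the prefix is constant, then
alternates between the fresh values `F` and `G`. -/
def gadgetY (a : ℕ → ℕ) (F G : ℕ) : ℕ → ℕ
  | 0 => a 0
  | n+1 =>
      if gadgetY a F G n = a 0 then (if a (n+1) = a 0 then a 0 else F)
      else (if gadgetY a F G n = F then G else F)

lemma gadgetY_mem (a : ℕ → ℕ) (F G : ℕ) (n : ℕ) :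
    gadgetY a F G n = a 0 ∨ gadgetY a F G n = F ∨ gadgetY a F G n = G := by
  induction n with
  | zero => left; rfl
  | succ n ih =>
      simp only [gadgetY]
      split_ifs <;> tauto

lemma gadgetY_stay (a : ℕ → ℕ) (F G : ℕ) (hF : a 0 ≠ F) (hG : a 0 ≠ G) (n : ℕ)
    (h : gadgetY a F G n ≠ a 0) : gadgetY a F G (n+1) ≠ a 0 := by
  simp only [gadgetY]
  split_ifs <;> omega

lemma gadgetY_kick (a : ℕ → ℕ) (F G : ℕ) (hF : a 0 ≠ F) (hG : a 0 ≠ G) (n : ℕ)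
    (h : a (n+1) ≠ a 0) : gadgetY a F G (n+1) ≠ a 0 := by
  simp only [gadgetY]
  split_ifs <;> omega

theorem hitting_set_odd3_gadget (ℓ : ℕ) (hℓ : 2 ≤ ℓ) (a : ℕ → ℕ) :
    (∃ y : ℕ → ℕ,
      ODD3 (a 0) (a 1) (y 1) ∧
      (∀ i : ℕ, 2 ≤ i → i ≤ ℓ - 1 → ODD3 (y (i - 1)) (a i) (y i)) ∧
      a 0 ≠ y (ℓ - 1)) ↔
    ∃ i < ℓ, ∃ j < ℓ, a i ≠ a j := by
  constructor
  · rintro ⟨y, h1, hchain, hend⟩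
    by_contra hcon
    push_neg at hcon
    -- all a i, i < ℓ, are equal
    have hall : ∀ i < ℓ, a i = a 0 := fun i hi => hcon i hi 0 (by omega)
    have key : ∀ i, 1 ≤ i → i ≤ ℓ - 1 → y i = a 0 := by
      intro i
      induction i with
      | zero => omega
      | succ n ih =>
          intro _ hn
          rcases Nat.eq_or_lt_of_le (show 1 ≤ n + 1 from by omega) with h | h
          · -- n + 1 = 1
            have hn1 : n = 0 := by omega
            subst hn1
            simp only [Nat.zero_add]
            have ha1 : a 1 = a 0 := hall 1 (by omega)
            rcases h1 with ⟨_, e2⟩ | ⟨e1, _⟩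
            · omega
            · exact absurd ha1.symm e1
          · have hyprev : y n = a 0 := ih (by omega) (by omega)
            have hcn := hchain (n+1) (by omega) hn
            simp only [Nat.add_sub_cancel] at hcn
            have han : a (n+1) = a 0 := hall (n+1) (by omega)
            rcases hcn with ⟨e1, e2⟩ | ⟨e1, _⟩
            · omega
            · rw [hyprev, han] at e1; exact absurd rfl e1
    exact hend (key (ℓ-1) (by omega) le_rfl).symm
  · rintro ⟨i, hi, j, hj, hij⟩
    -- some index k < ℓ with a k ≠ a 0
    obtain ⟨k, hk, hka⟩ : ∃ k < ℓ, a k ≠ a 0 := by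
      by_cases h : a i = a 0
      · exact ⟨j, hj, fun e => hij (by rw [h, e])⟩
      · exact ⟨i, hi, h⟩
    set F : ℕ := (Finset.range ℓ).sup a + 1 with hFdef
    set G : ℕ := F + 1 with hGdef
    have hbig : ∀ m < ℓ, a m < F := fun m hm =>
      Nat.lt_succ_of_le (Finset.le_sup (Finset.mem_range.mpr hm))
    have ha0F : a 0 ≠ F := Nat.ne_of_lt (hbig 0 (by omega))
    have ha0G : a 0 ≠ G := Nat.ne_of_lt (by have := hbig 0 (by omega); omega)
    have hFG : F ≠ G := by omega
    refine ⟨gadgetY a F G, ?_, ?_, ?_⟩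
    · -- first constraint
      show ODD3 (a 0) (a 1) (gadgetY a F G 1)
      have : gadgetY a F G 1 = if a 1 = a 0 then a 0 else F := by
        simp [gadgetY]
      rw [this]
      by_cases h : a 1 = a 0
      · rw [if_pos h]; left; exact ⟨h.symm, h⟩
      · rw [if_neg h]
        right
        exact ⟨fun e => h e.symm, ha0F, Nat.ne_of_lt (hbig 1 (by omega))⟩
    · intro i h2 hle
      obtain ⟨n, rfl⟩ : ∃ n, i = n + 1 := ⟨i - 1, by omega⟩
      simp only [Nat.add_sub_cancel]
      have hlt : n + 1 < ℓ := by omega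
      have haF : a (n+1) ≠ F := Nat.ne_of_lt (hbig _ hlt)
      have haG : a (n+1) ≠ G := Nat.ne_of_lt (by have := hbig _ hlt; omega)
      show ODD3 (gadgetY a F G n) (a (n+1)) (gadgetY a F G (n+1))
      rcases gadgetY_mem a F G n with hy | hy | hy <;> rw [hy]
      · simp only [gadgetY, hy, if_pos rfl]
        by_cases h : a (n+1) = a 0
        · rw [if_pos h]; left; exact ⟨h.symm, h⟩
        · rw [if_neg h]
          right
          exact ⟨fun e => h e.symm, ha0F, haF⟩
      · have hne : F ≠ a 0 := fun e => ha0F e.symm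
        have hv : gadgetY a F G (n+1) = G := by simp [gadgetY, hy, hne]
        rw [hv]
        right
        exact ⟨fun e => haF e.symm, hFG, haG⟩
      · have hne : G ≠ a 0 := fun e => ha0G e.symm
        have hne2 : G ≠ F := fun e => hFG e.symm
        have hv : gadgetY a F G (n+1) = F := by simp [gadgetY, hy, hne, hne2]
        rw [hv]
        right
        exact ⟨fun e => haG e.symm, hne2, haF⟩
    · -- a 0 ≠ y (ℓ - 1)
      have hk1 : 1 ≤ k := by
        rcases Nat.eq_zero_or_pos k with h | h
        · subst h; exact absurd rfl hka
        · exact h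
      have step : ∀ m, k ≤ m → gadgetY a F G m ≠ a 0 := by
        intro m
        induction m with
        | zero => intro h; omega
        | succ n ih =>
            intro h
            rcases Nat.eq_or_lt_of_le h with h' | h'
            · obtain ⟨n', rfl⟩ : ∃ n', k = n' + 1 := ⟨k - 1, by omega⟩
              rw [← h'] at *
              exact gadgetY_kick a F G ha0F ha0G n' hka
            · exact gadgetY_stay a F G ha0F ha0G n (ih (by omega))
      exact fun e => step (ℓ-1) (by omega) e.symm
end

section
/- Correctness of the split/NEQ₃ to Triple Multicut translation for equalities: in the constructed graph where each split constraint c contributes a vertex z_c adjacent to the variable-vertices of its positive part, two variable-vertices v_i and v_j are connected in the graph if and only if the conjunction of all (equality parts of the) constraints logically implies x_i = x_j, i.e., every assignment satisfying all constraints assigns x_i and x_j equal values, and moreover the transitive closure of the imposed equalities is exactly the connectivity relation. -/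
/-!
An assignment satisfying the equalities is constant along every edge of the gadget once each
constraint vertex `z_c` is labelled by the image of `P c`, so it agrees on connected variable
vertices. Conversely, sending each variable to the connected component of its vertex satisfies
every constraint, as all of `P c` hangs off the common neighbour `z_c`.
-/

namespace SimpleGraph

theorem Reachable.eq_of_forall_adj {V β : Type*} {G : SimpleGraph V} {f : V → β}
    (hf : ∀ a b, G.Adj a b → f a = f b) {u v : V} (h : G.Reachable u v) : f u = f v := by
  have := ((reachable_iff_reflTransGen u v).1 h).lift f hf
  rwa [Relation.reflTransGen_eq_self] at this

end SimpleGraph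

open SimpleGraph

section SplitGadget

variable {V C : Type*} (P : C → Set V)

def splitGadget : SimpleGraph (V ⊕ C) :=
  fromRel fun a b => ∃ (v : V) (c : C), v ∈ P c ∧ a = .inl v ∧ b = .inr c

def SatisfiesEqualities {β : Type*} (α : V → β) : Prop :=
  ∀ c, ∀ p ∈ P c, ∀ p' ∈ P c, α p = α p'

variable {P}

theorem SatisfiesEqualities.comp {β γ : Type*} {α : V → β} (hα : SatisfiesEqualities P α)
    (f : β → γ) : SatisfiesEqualities P (f ∘ α) :=
  fun c p hp p' hp' => congrArg f (hα c p hp p' hp')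

theorem splitGadget_adj_inl_inr {v : V} {c : C} (hv : v ∈ P c) :
    (splitGadget P).Adj (.inl v) (.inr c) :=
  (fromRel_adj _ _ _).2 ⟨Sum.inl_ne_inr, .inl ⟨v, c, hv, rfl, rfl⟩⟩

theorem splitGadget_reachable_of_mem {c : C} {p p' : V} (hp : p ∈ P c) (hp' : p' ∈ P c) :
    (splitGadget P).Reachable (.inl p) (.inl p') :=
  (splitGadget_adj_inl_inr hp).reachable.trans (splitGadget_adj_inl_inr hp').reachable.symm

theorem satisfiesEqualities_connectedComponentMk :
    SatisfiesEqualities P fun v => (splitGadget P).connectedComponentMk (.inl v) :=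
  fun _ _ hp _ hp' => ConnectedComponent.sound (splitGadget_reachable_of_mem hp hp')

/-- Labelling `z_c` by the image `α '' P c` avoids choosing a value for an empty `P c`. -/
theorem SatisfiesEqualities.eq_of_reachable {β : Type*} {α : V → β}
    (hα : SatisfiesEqualities P α) {i j : V} (h : (splitGadget P).Reachable (.inl i) (.inl j)) :
    α i = α j := by
  let label : V ⊕ C → Set β := Sum.elim (fun v => {α v}) (fun c => α '' P c)
  have image_eq {v : V} {c : C} (hv : v ∈ P c) : α '' P c = {α v} :=
    Set.eq_singleton_iff_unique_mem.2
      ⟨Set.mem_image_of_mem α hv, fun _ ⟨p, hp, hpα⟩ => hpα ▸ hα c p hp v hv⟩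
  have label_adj : ∀ a b, (splitGadget P).Adj a b → label a = label b := by
    rintro a b ⟨-, ⟨v, c, hv, rfl, rfl⟩ | ⟨v, c, hv, rfl, rfl⟩⟩
    · exact (image_eq hv).symm
    · exact image_eq hv
  exact Set.singleton_injective (h.eq_of_forall_adj label_adj)

theorem splitGadget_reachable_iff_forall_satisfiesEqualities (β : Type*) [Nontrivial β]
    {i j : V} : (splitGadget P).Reachable (.inl i) (.inl j) ↔
      ∀ α : V → β, SatisfiesEqualities P α → α i = α j := by
  classical
  refine ⟨fun h α hα => hα.eq_of_reachable h, fun h => ?_⟩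
  obtain ⟨x, y, hxy⟩ := exists_pair_ne β
  let separate (K : (splitGadget P).ConnectedComponent) : β :=
    if K = (splitGadget P).connectedComponentMk (.inl i) then x else y
  have hij := h _ (satisfiesEqualities_connectedComponentMk.comp separate)
  simpa [separate, ConnectedComponent.eq, hxy, eq_comm] using hij

end SplitGadget

/-- In the gadget graph built from the equality parts of split constraints
(one vertex per variable, one vertex `z_c` per constraint `c`, with edges
from `z_c` to the variables of its positive part `P c`), two variable
vertices are connected iff the equality `x i = x j` is entailed by the
conjunction of all imposed equalities. -/
theorem split_gadget_connectivity (n m : ℕ) (P : Fin m → Finset (Fin n)) :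
    ∀ i j : Fin n,
      (SimpleGraph.fromRel (fun a b : Fin n ⊕ Fin m =>
        ∃ (v : Fin n) (c : Fin m), v ∈ P c ∧ a = Sum.inl v ∧ b = Sum.inr c)).Reachable
        (Sum.inl i) (Sum.inl j) ↔
      ∀ α : Fin n → ℕ,
        (∀ c : Fin m, ∀ p ∈ P c, ∀ p' ∈ P c, α p = α p') → α i = α j :=
  fun _ _ => splitGadget_reachable_iff_forall_satisfiesEqualities 
    (P := fun c : Fin m => (P c : Set (Fin n))) ℕ
end
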